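/- Russo's formula for Poisson loop ensembles: Let β be an intensity function on loops with Σ_{ℓ ∩ B(n) ≠ ∅} β(ℓ)μ(ℓ) < ∞, and let 𝓛_β be the Poisson point process of loops with intensity β(ℓ)μ(dℓ). Then for each fixed loop ℓ₀, the partial derivative of ℙ[0 ↔ ∂B(n) in 𝓛_β] with respect to β(ℓ₀) equals μ(ℓ₀)·ℙ[𝒞_β(0) is joined to 𝒞_β(∂B(n)) by ℓ₀, and 𝒞_β(0) ∩ ∂B(n) = ∅], where 𝒞_β(A) is the union of open clusters of vertices of A. -/

import Mathlib

open MeasureTheory Set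

/-- A based loop on `ℤ^d`: a cyclic sequence of length `len ≥ 2` of vertices of `ℤ^d`
(indexed by `ZMod len`) such that consecutive vertices (cyclically) differ by a unit step
(nearest-neighbor steps of simple random walk); in particular consecutive vertices differ. -/
structure BasedLoop (d : ℕ) where
  len : ℕ
  two_le_len : 2 ≤ len
  path : ZMod len → Fin d → ℤ
  step : ∀ i : ZMod len, (∑ k : Fin d, |path (i + 1) k - path i k|) = 1

/-- Two based loops are equivalent if they coincide after a cyclic rotation. -/
def BasedLoop.Equiv {d : ℕ} (a b : BasedLoop d) : Prop :=
  a.len = b.len ∧ ∃ r : ℤ, ∀ i : ℤ, b.path (i : ZMod b.len) = a.path ((i + r : ℤ) : ZMod a.len)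

/-- A (discrete, non-trivial) loop on `ℤ^d`: an equivalence class of based loops under
cyclic rotation. -/
def Loop (d : ℕ) := Quot (@BasedLoop.Equiv d)

/-- The length `|ℓ|` of a loop. -/
def Loop.len {d : ℕ} : Loop d → ℕ :=
  Quot.lift BasedLoop.len (fun _ _ h => h.1)

/-- The set of vertices covered by a loop. -/
def Loop.vertexSet {d : ℕ} (L : Loop d) : Set (Fin d → ℤ) :=
  {x | ∃ ℓ : BasedLoop d, Quot.mk _ ℓ = L ∧ x ∈ Set.range ℓ.path}

/-- The SRW loop measure of a single loop: the number of based representatives times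
`(1/n)·(1/(2d))^n` where `n` is the length (push-forward of the based loop weight
`(1/n)·Q^{x₁}_{x₂}⋯Q^{xₙ}_{x₁}`, `Q` the SRW transition matrix). -/
noncomputable def Loop.mu {d : ℕ} (L : Loop d) : ℝ :=
  (Set.ncard {ℓ : BasedLoop d | Quot.mk _ ℓ = L} : ℝ) * (1 / (L.len : ℝ)) *
    (1 / (2 * (d : ℝ))) ^ L.len

/-- A loop traverses the (unoriented) edge `{x, y}`. -/
def Loop.Traverses {d : ℕ} (L : Loop d) (x y : Fin d → ℤ) : Prop :=
  ∃ ℓ : BasedLoop d, Quot.mk _ ℓ = L ∧ ∃ i : ZMod ℓ.len,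
    (ℓ.path i = x ∧ ℓ.path (i + 1) = y) ∨ (ℓ.path i = y ∧ ℓ.path (i + 1) = x)

/-- The box `B(n) = {-n, …, n}^d` in `ℤ^d`. -/
def linfBall (d : ℕ) (n : ℕ) : Set (Fin d → ℤ) :=
  {x | ∀ k, |x k| ≤ (n : ℤ)}

/-- The boundary `∂B(n) = {x : |x|_∞ = n}` of the box `B(n)`. -/
def linfSphere (d : ℕ) (n : ℕ) : Set (Fin d → ℤ) :=
  {x | (∀ k, |x k| ≤ (n : ℤ)) ∧ ∃ k, |x k| = (n : ℤ)}

/-- Given a collection `S` of loops, two vertices are adjacent if some loop of `S`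
traverses the edge between them. -/
def loopAdj {d : ℕ} (S : Set (Loop d)) (x y : Fin d → ℤ) : Prop :=
  ∃ L ∈ S, L.Traverses x y

/-- Connection by open edges induced by the collection of loops `S`. -/
def loopConn {d : ℕ} (S : Set (Loop d)) (x y : Fin d → ℤ) : Prop :=
  Relation.ReflTransGen (loopAdj S) x y

/-- The open cluster of the vertex `x` for the collection of loops `S`. -/
def loopCluster {d : ℕ} (S : Set (Loop d)) (x : Fin d → ℤ) : Set (Fin d → ℤ) :=
  {y | loopConn S x y}

/-- `N` is a Poisson point process of loops with intensity function `ι` (the multiplicity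
`N L` of each loop `L` is Poisson of parameter `ι L`, independently over loops). -/
def IsPoissonLoopProcess {d : ℕ} {Ω : Type*} [MeasurableSpace Ω] (ℙ : Measure Ω)
    (N : Loop d → Ω → ℕ) (ι : Loop d → ℝ) : Prop :=
  (∀ L, Measurable (N L)) ∧
  ProbabilityTheory.iIndepFun N ℙ ∧
  ∀ (L : Loop d) (k : ℕ),
    ℙ {ω | N L ω = k} = ENNReal.ofReal (Real.exp (-ι L) * (ι L) ^ k / (Nat.factorial k))

/-- The (multi-)collection of loops present in the configuration `ω`, as a set. -/
def loopsOf {d : ℕ} {Ω : Type*} (N : Loop d → Ω → ℕ) (ω : Ω) : Set (Loop d) :=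
  {L | 0 < N L ω}

open Classical

/-!
Let `a` and `b` be the probabilities that `0` is connected to `∂B(n)` by the loops other than
`ℓ₀`, with and without one copy of `ℓ₀` added. Given the other loops, the connection event depends
on the multiplicity `N(ℓ₀) ~ Poisson(μ(ℓ₀) t)` only through whether it vanishes, so by
independence the connection probability at intensity `t` is
`b e^{-μ(ℓ₀) t} + a (1 - e^{-μ(ℓ₀) t})`. Its derivative at `β(ℓ₀)` is
`μ(ℓ₀) e^{-μ(ℓ₀) β(ℓ₀)} (a - b)`, and `e^{-μ(ℓ₀) β(ℓ₀)} (a - b)` is the probability that `ℓ₀` is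
absent and adding it creates the connection, which is the event of the statement.
A process of intensity `t` at `ℓ₀` is obtained by replacing `N(ℓ₀)` with an independent Poisson
variable on `Ω × ℕ`.
-/

open Relation

variable {d : ℕ}

namespace BasedLoop

instance (ℓ : BasedLoop d) : NeZero ℓ.len := ⟨by have := ℓ.two_le_len; omega⟩

instance : Countable (BasedLoop d) := by
  refine Function.Injective.countable
    (f := fun ℓ : BasedLoop d => (ℓ.len, List.ofFn fun k : Fin ℓ.len => ℓ.path (k : ℕ))) ?_
  rintro ⟨n, hn, p, hp⟩ ⟨m, hm, q, hq⟩ h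
  obtain ⟨rfl, hpq⟩ := Prod.mk.inj h
  have : NeZero n := ⟨by omega⟩
  obtain rfl : p = q := funext fun i => by
    simpa using congrFun (List.ofFn_injective hpq) ⟨i.val, ZMod.val_lt i⟩
  rfl

lemma range_path_eq_of_equiv {a b : BasedLoop d} (h : a.Equiv b) :
    range a.path = range b.path := by
  obtain ⟨-, r, hr⟩ := h
  ext x
  constructor
  · rintro ⟨j, rfl⟩
    refine ⟨((j.cast - r : ℤ) : ZMod b.len), ?_⟩
    rw [hr, sub_add_cancel, ZMod.intCast_zmod_cast]
  · rintro ⟨j, rfl⟩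
    rw [← ZMod.intCast_zmod_cast j, hr]
    exact mem_range_self _

end BasedLoop

namespace Loop

instance : Countable (Loop d) := Quot.mk_surjective.countable

lemma vertexSet_mk (ℓ : BasedLoop d) :
    Loop.vertexSet (Quot.mk _ ℓ) = range ℓ.path := by
  refine Subset.antisymm ?_ fun x hx => ⟨ℓ, rfl, hx⟩
  rintro x ⟨ℓ', hℓ', hx⟩
  suffices ∀ a b : BasedLoop d, EqvGen BasedLoop.Equiv a b → range a.path = range b.path from
    this ℓ' ℓ (Quot.eqvGen_exact hℓ') ▸ hx
  intro a b hab
  induction hab with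
  | rel _ _ h => exact BasedLoop.range_path_eq_of_equiv h
  | refl => rfl
  | symm _ _ _ ih => exact ih.symm
  | trans _ _ _ _ _ ih₁ ih₂ => exact ih₁.trans ih₂

lemma Traverses.mem_vertexSet {L : Loop d} {x y : Fin d → ℤ} (h : L.Traverses x y) :
    x ∈ L.vertexSet := by
  obtain ⟨ℓ, hℓ, i, h | h⟩ := h
  · exact ⟨ℓ, hℓ, i, h.1⟩
  · exact ⟨ℓ, hℓ, i + 1, h.2⟩

lemma Traverses.symm {L : Loop d} {x y : Fin d → ℤ} (h : L.Traverses x y) :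
    L.Traverses y x := by
  obtain ⟨ℓ, hℓ, i, h⟩ := h
  exact ⟨ℓ, hℓ, i, h.symm⟩

lemma mu_nonneg (L : Loop d) : 0 ≤ L.mu := by
  unfold Loop.mu
  positivity

end Loop

instance (S : Set (Loop d)) : Std.Symm (loopAdj S) := ⟨fun _ _ ⟨L, hL, h⟩ => ⟨L, hL, h.symm⟩⟩

namespace loopConn

variable {S : Set (Loop d)} {x y : Fin d → ℤ}

lemma symm (h : loopConn S x y) : loopConn S y x :=
  Std.Symm.symm (r := ReflTransGen (loopAdj S)) _ _ h

lemma mono {S' : Set (Loop d)} (hS : S ⊆ S') (h : loopConn S x y) : loopConn S' x y :=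
  ReflTransGen.mono (p := loopAdj S') (fun _ _ ⟨L, hL, h⟩ => ⟨L, hS hL, h⟩) _ _ h

lemma of_mem_vertexSet {L : Loop d} (hL : L ∈ S) (hx : x ∈ L.vertexSet)
    (hy : y ∈ L.vertexSet) : loopConn S x y := by
  obtain ⟨ℓ, rfl⟩ := Quot.exists_rep L
  rw [Loop.vertexSet_mk] at hx hy
  obtain ⟨i, rfl⟩ := hx
  obtain ⟨j, rfl⟩ := hy
  have walk : ∀ m : ℕ, loopConn S (ℓ.path i) (ℓ.path (i + m)) := by
    intro m
    induction m with
    | zero => rw [Nat.cast_zero, add_zero]; exact ReflTransGen.refl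
    | succ k ih =>
      refine ih.tail ⟨_, hL, ℓ, rfl, i + k, Or.inl ⟨rfl, ?_⟩⟩
      push_cast
      ring_nf
  simpa using walk (j - i).val

lemma of_insert {ℓ₀ : Loop d} (h : loopConn (insert ℓ₀ S) x y) :
    loopConn S x y ∨
      (∃ u ∈ ℓ₀.vertexSet, loopConn S x u) ∧ ∃ v ∈ ℓ₀.vertexSet, loopConn S v y := by
  induction h with
  | refl => exact Or.inl ReflTransGen.refl
  | @tail z w _ hzw ih =>
    obtain ⟨L, hL | hL, hLzw⟩ := hzw
    · subst hL
      refine Or.inr ⟨?_, w, hLzw.symm.mem_vertexSet, ReflTransGen.refl⟩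
      exact ih.elim (fun h => ⟨z, hLzw.mem_vertexSet, h⟩) And.left
    · exact ih.imp (fun h => h.tail ⟨L, hL, hLzw⟩)
        fun ⟨hu, v, hv, hvz⟩ => ⟨hu, v, hv, hvz.tail ⟨L, hL, hLzw⟩⟩

end loopConn

lemma joins_clusters_iff {S : Set (Loop d)} {ℓ₀ : Loop d} {x : Fin d → ℤ}
    {T : Set (Fin d → ℤ)} :
    ((ℓ₀.vertexSet ∩ loopCluster S x).Nonempty ∧
        (ℓ₀.vertexSet ∩ ⋃ z ∈ T, loopCluster S z).Nonempty ∧ loopCluster S x ∩ T = ∅) ↔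
      ℓ₀ ∉ S ∧ (loopCluster (insert ℓ₀ S) x ∩ T).Nonempty ∧ ¬(loopCluster S x ∩ T).Nonempty := by
  rw [not_nonempty_iff_eq_empty]
  constructor
  · rintro ⟨⟨u, hu, hxu⟩, ⟨v, hv, hvT⟩, hempty⟩
    obtain ⟨z, hz, hzv⟩ := mem_iUnion₂.mp hvT
    have hxz : loopConn (insert ℓ₀ S) x z :=
      ((hxu.mono (subset_insert _ _)).trans
        (loopConn.of_mem_vertexSet (mem_insert _ _) hu hv)).trans
        (hzv.symm.mono (subset_insert _ _))
    refine ⟨fun hℓ₀ => ?_, ⟨z, hxz, hz⟩, hempty⟩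
    rw [insert_eq_of_mem hℓ₀] at hxz
    exact hempty.subset ⟨hxz, hz⟩
  · rintro ⟨-, ⟨z, hxz, hz⟩, hempty⟩
    rcases loopConn.of_insert hxz with hxz | ⟨⟨u, hu, hxu⟩, v, hv, hvz⟩
    · exact (hempty.subset ⟨hxz, hz⟩).elim
    · exact ⟨⟨u, hu, hxu⟩, ⟨v, hv, mem_iUnion₂.mpr ⟨z, hz, hvz.symm⟩⟩, hempty⟩

section Measurability

variable {Ω V : Type*} {m : MeasurableSpace Ω}

lemma measurableSet_isChain (R : Ω → V → V → Prop) (hR : ∀ x y, MeasurableSet[m] {ω | R ω x y}) :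
    ∀ l : List V, MeasurableSet[m] {ω | List.IsChain (R ω) l}
  | [] => by simp
  | [_] => by simp
  | a :: b :: l => by
    simp_rw [List.isChain_cons_cons, ofPred_and]
    exact (hR a b).inter (measurableSet_isChain R hR (b :: l))

lemma measurableSet_reflTransGen [Countable V] (R : Ω → V → V → Prop)
    (hR : ∀ x y, MeasurableSet[m] {ω | R ω x y}) (a b : V) :
    MeasurableSet[m] {ω | ReflTransGen (R ω) a b} := by
  have : {ω | ReflTransGen (R ω) a b} = ⋃ (l : List V) (_ : (a :: l).getLast (by simp) = b),
      {ω | List.IsChain (R ω) (a :: l)} := by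
    ext ω
    simp only [mem_ofPred_eq, mem_iUnion]
    constructor
    · intro h
      obtain ⟨l, hl, hb⟩ := List.exists_isChain_cons_of_relationReflTransGen h
      exact ⟨l, hb, hl⟩
    · rintro ⟨l, hb, hl⟩
      exact List.relationReflTransGen_of_exists_isChain_cons l hl hb
  rw [this]
  exact .iUnion fun l => .iUnion fun _ => measurableSet_isChain R hR _

lemma measurableSet_loopCluster_inter_nonempty {R : Ω → Set (Loop d)}
    (hR : ∀ L, MeasurableSet[m] {ω | L ∈ R ω}) (x : Fin d → ℤ) (T : Set (Fin d → ℤ)) :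
    MeasurableSet[m] {ω | (loopCluster (R ω) x ∩ T).Nonempty} := by
  have hadj (y z : Fin d → ℤ) : MeasurableSet[m] {ω | loopAdj (R ω) y z} := by
    simp_rw [loopAdj, ofPred_exists, ofPred_and]
    exact .iUnion fun L => (hR L).inter (.const _)
  simp_rw [Set.Nonempty, mem_inter_iff, ofPred_exists, ofPred_and]
  exact .iUnion fun z => (measurableSet_reflTransGen _ hadj x z).inter (.const _)

end Measurability

section Independence

open ProbabilityTheory

variable {ι Ω α : Type*} [MeasurableSpace α] {N : ι → Ω → α}

abbrev comapExcept (N : ι → Ω → α) (i₀ : ι) : MeasurableSpace Ω :=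
  ⨆ i ∈ ({i₀}ᶜ : Set ι), MeasurableSpace.comap (N i) inferInstance

lemma comap_le_comapExcept {i₀ i : ι} (h : i ≠ i₀) :
    MeasurableSpace.comap (N i) inferInstance ≤ comapExcept N i₀ :=
  le_iSup₂ (f := fun i (_ : i ∈ ({i₀}ᶜ : Set ι)) => MeasurableSpace.comap (N i) _) i h

lemma comapExcept_le [m : MeasurableSpace Ω] (hN : ∀ i, Measurable (N i)) (i₀ : ι) :
    comapExcept N i₀ ≤ m :=
  iSup₂_le fun i _ => (hN i).comap_le

lemma ProbabilityTheory.iIndepFun.measure_preimage_inter_eq_mul [MeasurableSpace Ω]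
    {P : Measure Ω} (hN : iIndepFun N P) (hmeas : ∀ i, Measurable (N i)) (i₀ : ι) {A : Set α}
    (hA : MeasurableSet A) {E : Set Ω} (hE : MeasurableSet[comapExcept N i₀] E) :
    P (N i₀ ⁻¹' A ∩ E) = P (N i₀ ⁻¹' A) * P E := by
  have hindep := indep_iSup_of_disjoint (fun i => (hmeas i).comap_le) hN.iIndep
    (disjoint_compl_right (a := ({i₀} : Set ι)))
  refine (Indep_iff _ _ _).mp hindep _ _ ?_ hE
  exact le_iSup₂ (f := fun i (_ : i ∈ ({i₀} : Set ι)) => MeasurableSpace.comap (N i) _) i₀ rfl _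
    ⟨A, hA, rfl⟩

end Independence

section Resampling

open ProbabilityTheory

variable {ι Ω α : Type*} {N : ι → Ω → α} {i₀ : ι}

noncomputable def resampleAt (N : ι → Ω → α) (i₀ : ι) : ι → Ω × α → α :=
  fun i p => if i = i₀ then p.2 else N i p.1

lemma preimage_resampleAt (i : ι) (A : Set α) :
    resampleAt N i₀ i ⁻¹' A = if i = i₀ then univ ×ˢ A else (N i ⁻¹' A) ×ˢ univ := by
  ext p
  split_ifs with h <;> simp [resampleAt, h]

variable [MeasurableSpace Ω] [MeasurableSpace α]

lemma measurable_resampleAt (hN : ∀ i, Measurable (N i)) (i : ι) :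
    Measurable (resampleAt N i₀ i) := by
  unfold resampleAt
  by_cases h : i = i₀ <;> simp only [h, if_true, if_false]
  · exact measurable_snd
  · exact (hN i).comp measurable_fst

variable {P : Measure Ω} {Q : Measure α} [IsProbabilityMeasure P] [IsProbabilityMeasure Q]

lemma measure_preimage_resampleAt (i : ι) (A : Set α) :
    P.prod Q (resampleAt N i₀ i ⁻¹' A) = if i = i₀ then Q A else P (N i ⁻¹' A) := by
  rw [preimage_resampleAt]
  split_ifs <;> simp [Measure.prod_prod]

lemma iIndepFun_resampleAt (hN : iIndepFun N P) :
    iIndepFun (resampleAt N i₀) (P.prod Q) := by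
  rw [iIndepFun_iff_measure_inter_preimage_eq_mul]
  intro S A hA
  have hinter : ⋂ i ∈ S, resampleAt N i₀ i ⁻¹' A i =
      (⋂ i ∈ S.erase i₀, N i ⁻¹' A i) ×ˢ ⋂ (_ : i₀ ∈ S), A i₀ := by
    ext p
    simp only [mem_iInter, mem_preimage, mem_prod, Finset.mem_erase, resampleAt]
    grind
  have hrest : ∏ i ∈ S.erase i₀, P.prod Q (resampleAt N i₀ i ⁻¹' A i) =
      ∏ i ∈ S.erase i₀, P (N i ⁻¹' A i) :=
    Finset.prod_congr rfl fun i hi => by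
      rw [measure_preimage_resampleAt, if_neg (Finset.ne_of_mem_erase hi)]
  rw [hinter, Measure.prod_prod,
    hN.measure_inter_preimage_eq_mul _ fun i hi => hA i (Finset.mem_of_mem_erase hi)]
  by_cases h : i₀ ∈ S
  · rw [← Finset.mul_prod_erase S _ h, hrest, measure_preimage_resampleAt, if_pos rfl, mul_comm]
    simp [h]
  · rw [Finset.erase_eq_of_notMem h] at hrest ⊢
    simp [h, hrest]

end Resampling

section LoopSoup

open ProbabilityTheory

variable {Ω : Type*} {N : Loop d → Ω → ℕ}

lemma loopsOf_resampleAt (ℓ₀ : Loop d) (ω : Ω) (k : ℕ) :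
    loopsOf (resampleAt N ℓ₀) (ω, k) =
      if k = 0 then loopsOf N ω \ {ℓ₀} else insert ℓ₀ (loopsOf N ω \ {ℓ₀}) := by
  ext L
  by_cases hL : L = ℓ₀ <;> split_ifs with hk <;>
    simp [loopsOf, resampleAt, hL, hk, Nat.pos_iff_ne_zero]

variable (N) in
lemma measurableSet_mem_loopsOf_diff (ℓ₀ L : Loop d) :
    MeasurableSet[comapExcept N ℓ₀] {ω | L ∈ loopsOf N ω \ {ℓ₀}} := by
  by_cases hL : L = ℓ₀
  · simp [hL]
  · have : {ω | L ∈ loopsOf N ω \ {ℓ₀}} = N L ⁻¹' Ioi 0 := by ext; simp [loopsOf, hL]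
    rw [this]
    exact comap_le_comapExcept hL _ ⟨_, measurableSet_Ioi, rfl⟩

variable (N) in
lemma measurableSet_loopCluster_diff_inter_nonempty (ℓ₀ : Loop d) (x : Fin d → ℤ)
    (T : Set (Fin d → ℤ)) :
    MeasurableSet[comapExcept N ℓ₀]
      {ω | (loopCluster (loopsOf N ω \ {ℓ₀}) x ∩ T).Nonempty} :=
  measurableSet_loopCluster_inter_nonempty (measurableSet_mem_loopsOf_diff N ℓ₀) x T

variable (N) in
lemma measurableSet_loopCluster_insert_diff_inter_nonempty (ℓ₀ : Loop d) (x : Fin d → ℤ)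
    (T : Set (Fin d → ℤ)) :
    MeasurableSet[comapExcept N ℓ₀]
      {ω | (loopCluster (insert ℓ₀ (loopsOf N ω \ {ℓ₀})) x ∩ T).Nonempty} := by
  refine measurableSet_loopCluster_inter_nonempty (fun L => ?_) x T
  simp_rw [mem_insert_iff, ofPred_or]
  exact (MeasurableSet.const _).union (measurableSet_mem_loopsOf_diff N ℓ₀ L)

variable [MeasurableSpace Ω] {P : Measure Ω} [IsProbabilityMeasure P] {ρ : Loop d → ℝ}

lemma IsPoissonLoopProcess.prod_poissonMeasure (h : IsPoissonLoopProcess P N ρ) (ℓ₀ : Loop d)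
    (r : NNReal) :
    IsPoissonLoopProcess (P.prod (poissonMeasure r)) (resampleAt N ℓ₀)
      (Function.update ρ ℓ₀ r) := by
  obtain ⟨hmeas, hindep, hlaw⟩ := h
  refine ⟨measurable_resampleAt hmeas, iIndepFun_resampleAt hindep, fun L k => ?_⟩
  change P.prod (poissonMeasure r) (resampleAt N ℓ₀ L ⁻¹' {k}) = _
  rw [measure_preimage_resampleAt]
  by_cases hL : L = ℓ₀
  · simp [hL, poissonMeasure_singleton]
  · rw [if_neg hL, Function.update_of_ne hL]
    exact hlaw L k

lemma measureReal_prod_poissonMeasure_resampleAt (hN : ∀ L, Measurable (N L)) (ℓ₀ : Loop d)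
    (r : NNReal) (x : Fin d → ℤ) (T : Set (Fin d → ℤ)) :
    (P.prod (poissonMeasure r)).real
        {p | (loopCluster (loopsOf (resampleAt N ℓ₀) p) x ∩ T).Nonempty} =
      P.real {ω | (loopCluster (loopsOf N ω \ {ℓ₀}) x ∩ T).Nonempty} * Real.exp (-r) +
        P.real {ω | (loopCluster (insert ℓ₀ (loopsOf N ω \ {ℓ₀})) x ∩ T).Nonempty} *
          (1 - Real.exp (-r)) := by
  set E₀ := {ω | (loopCluster (loopsOf N ω \ {ℓ₀}) x ∩ T).Nonempty}
  set E₁ := {ω | (loopCluster (insert ℓ₀ (loopsOf N ω \ {ℓ₀})) x ∩ T).Nonempty}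
  have hE₀ : MeasurableSet E₀ :=
    comapExcept_le hN ℓ₀ _ (measurableSet_loopCluster_diff_inter_nonempty N ℓ₀ x T)
  have hsplit : {p | (loopCluster (loopsOf (resampleAt N ℓ₀) p) x ∩ T).Nonempty} =
      E₀ ×ˢ {0} ∪ E₁ ×ˢ {0}ᶜ := by
    ext ⟨ω, k⟩
    rcases eq_or_ne k 0 with rfl | hk
    · simp [loopsOf_resampleAt, E₀, E₁]
    · simp [loopsOf_resampleAt, hk, E₀, E₁]
  rw [hsplit, measureReal_union' (disjoint_prod.mpr (Or.inr disjoint_compl_right))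
      (hE₀.prod (measurableSet_singleton 0)), measureReal_prod_prod, measureReal_prod_prod,
    probReal_compl_eq_one_sub (measurableSet_singleton 0), poissonMeasure_real_singleton]
  simp

lemma IsPoissonLoopProcess.measureReal_joins_clusters (h : IsPoissonLoopProcess P N ρ)
    (ℓ₀ : Loop d) (x : Fin d → ℤ) (T : Set (Fin d → ℤ)) :
    P.real {ω | (ℓ₀.vertexSet ∩ loopCluster (loopsOf N ω) x).Nonempty ∧
        (ℓ₀.vertexSet ∩ ⋃ z ∈ T, loopCluster (loopsOf N ω) z).Nonempty ∧
        loopCluster (loopsOf N ω) x ∩ T = ∅} =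
      Real.exp (-ρ ℓ₀) *
        (P.real {ω | (loopCluster (insert ℓ₀ (loopsOf N ω \ {ℓ₀})) x ∩ T).Nonempty} -
          P.real {ω | (loopCluster (loopsOf N ω \ {ℓ₀}) x ∩ T).Nonempty}) := by
  obtain ⟨hmeas, hindep, hlaw⟩ := h
  set E₀ := {ω | (loopCluster (loopsOf N ω \ {ℓ₀}) x ∩ T).Nonempty}
  set E₁ := {ω | (loopCluster (insert ℓ₀ (loopsOf N ω \ {ℓ₀})) x ∩ T).Nonempty}
  have hE₀ := measurableSet_loopCluster_diff_inter_nonempty N ℓ₀ x T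
  have hE₁ := measurableSet_loopCluster_insert_diff_inter_nonempty N ℓ₀ x T
  have hevent : {ω | (ℓ₀.vertexSet ∩ loopCluster (loopsOf N ω) x).Nonempty ∧
      (ℓ₀.vertexSet ∩ ⋃ z ∈ T, loopCluster (loopsOf N ω) z).Nonempty ∧
      loopCluster (loopsOf N ω) x ∩ T = ∅} = N ℓ₀ ⁻¹' {0} ∩ (E₁ \ E₀) := by
    ext ω
    rw [mem_ofPred_eq, joins_clusters_iff]
    by_cases h0 : N ℓ₀ ω = 0
    · have hℓ₀ : ℓ₀ ∉ loopsOf N ω := by simp [loopsOf, h0]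
      simp [E₀, E₁, hℓ₀, h0, sdiff_singleton_eq_self hℓ₀]
    · have hℓ₀ : ℓ₀ ∈ loopsOf N ω := Nat.pos_of_ne_zero h0
      simp [hℓ₀, h0]
  have hsub : E₀ ⊆ E₁ := fun ω ⟨z, hz, hzT⟩ => ⟨z, loopConn.mono (subset_insert _ _) hz, hzT⟩
  have hN0 : P.real (N ℓ₀ ⁻¹' {0}) = Real.exp (-ρ ℓ₀) := by
    rw [measureReal_def, show N ℓ₀ ⁻¹' {0} = {ω | N ℓ₀ ω = 0} from rfl, hlaw]
    simp [Real.exp_nonneg]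
  rw [hevent, measureReal_def,
    hindep.measure_preimage_inter_eq_mul hmeas ℓ₀ (measurableSet_singleton 0) (hE₁.diff hE₀),
    ENNReal.toReal_mul, ← measureReal_def, ← measureReal_def, hN0,
    measureReal_sdiff hsub (comapExcept_le hmeas ℓ₀ _ hE₀)]

end LoopSoup

lemma Function.update_mul_right {α M : Type*} [Mul M] (f g : α → M) (a : α) (t : M) :
    (fun x => Function.update f a t x * g x) =
      Function.update (fun x => f x * g x) a (t * g a) := by
  ext x
  rcases eq_or_ne x a with rfl | hx <;> simp [*]

lemma hasDerivAt_exp_mix (a b c x : ℝ) :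
    HasDerivAt (fun t => b * Real.exp (-(t * c)) + a * (1 - Real.exp (-(t * c))))
      (c * (Real.exp (-(x * c)) * (a - b))) x := by
  have hlin : HasDerivAt (fun t => -(t * c)) (-c) x := (hasDerivAt_mul_const c).fun_neg
  exact ((hlin.exp.const_mul b).add ((hlin.exp.const_sub 1).const_mul a)).congr_deriv (by ring)

theorem russo_formula_loop_soup_general (d n : ℕ)
    (β : Loop d → ℝ) (hβ : ∀ L, 0 ≤ β L)
    (P : (Loop d → ℝ) → ℝ)
    (hP : ∀ (γ : Loop d → ℝ), (∀ L, 0 ≤ γ L) →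
      ∀ (Ω : Type) (_ : MeasurableSpace Ω) (ℙ : Measure Ω) (_ : IsProbabilityMeasure ℙ)
        (N : Loop d → Ω → ℕ), IsPoissonLoopProcess ℙ N (fun L => γ L * L.mu) →
      P γ = (ℙ {ω | (loopCluster (loopsOf N ω) 0 ∩ linfSphere d n).Nonempty}).toReal)
    (ℓ₀ : Loop d) (hℓ₀ : 0 < β ℓ₀) :
    ∀ (Ω : Type) (_ : MeasurableSpace Ω) (ℙ : Measure Ω) (_ : IsProbabilityMeasure ℙ)
      (N : Loop d → Ω → ℕ), IsPoissonLoopProcess ℙ N (fun L => β L * L.mu) →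
    HasDerivAt (fun t : ℝ => P (Function.update β ℓ₀ t))
      (Loop.mu ℓ₀ *
        (ℙ {ω | (ℓ₀.vertexSet ∩ loopCluster (loopsOf N ω) 0).Nonempty ∧
              (ℓ₀.vertexSet ∩ ⋃ z ∈ linfSphere d n, loopCluster (loopsOf N ω) z).Nonempty ∧
              loopCluster (loopsOf N ω) 0 ∩ linfSphere d n = ∅}).toReal)
      (β ℓ₀) := by
  intro Ω _ ℙ _ N hN
  set a := ℙ.real
    {ω | (loopCluster (insert ℓ₀ (loopsOf N ω \ {ℓ₀})) 0 ∩ linfSphere d n).Nonempty}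
  set b := ℙ.real {ω | (loopCluster (loopsOf N ω \ {ℓ₀}) 0 ∩ linfSphere d n).Nonempty}
  have hP_update : ∀ t ≥ 0, P (Function.update β ℓ₀ t) =
      b * Real.exp (-(t * ℓ₀.mu)) + a * (1 - Real.exp (-(t * ℓ₀.mu))) := by
    intro t ht
    have htμ₀ : 0 ≤ t * ℓ₀.mu := mul_nonneg ht ℓ₀.mu_nonneg
    have hN' := hN.prod_poissonMeasure ℓ₀ (t * ℓ₀.mu).toNNReal
    rw [Real.coe_toNNReal _ htμ₀, ← Function.update_mul_right] at hN'
    rw [hP _ (le_update_iff.2 ⟨ht, fun L _ => hβ L⟩) _ _ _ inferInstance _ hN', ← measureReal_def,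
      measureReal_prod_poissonMeasure_resampleAt hN.1, Real.coe_toNNReal _ htμ₀]
  rw [← measureReal_def, hN.measureReal_joins_clusters]
  refine (hasDerivAt_exp_mix a b ℓ₀.mu (β ℓ₀)).congr_of_eventuallyEq ?_
  filter_upwards [Ioi_mem_nhds hℓ₀] with t ht
  exact hP_update t ht.le

/-- **Russo's formula for Poisson loop ensembles.**
Let `β` be a nonnegative intensity function on loops with
`Σ_{ℓ ∩ B(n) ≠ ∅} β(ℓ)μ(ℓ) < ∞`, and let `P` be the function assigning to an intensity
function the probability that `0` is connected to `∂B(n)` in the associated Poisson loop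
soup `𝓛_β` (of intensity `β(ℓ)μ(dℓ)`). Then for each fixed loop `ℓ₀` (with `β(ℓ₀) > 0`),
the partial derivative of `P` with respect to the coordinate `β(ℓ₀)` equals
`μ(ℓ₀)·ℙ[𝒞_β(0) ↔^{ℓ₀} 𝒞_β(∂B(n)), 𝒞_β(0) ∩ ∂B(n) = ∅]`. -/
theorem russo_formula_loop_soup (d n : ℕ) (hn : 1 ≤ n)
    (β : Loop d → ℝ) (hβ : ∀ L, 0 ≤ β L)
    (hfin : Summable (fun L : {L : Loop d // (L.vertexSet ∩ linfBall d n).Nonempty} =>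
      β L.1 * Loop.mu L.1))
    (P : (Loop d → ℝ) → ℝ)
    (hP : ∀ (γ : Loop d → ℝ), (∀ L, 0 ≤ γ L) →
      ∀ (Ω : Type) (_ : MeasurableSpace Ω) (ℙ : Measure Ω) (_ : IsProbabilityMeasure ℙ)
        (N : Loop d → Ω → ℕ), IsPoissonLoopProcess ℙ N (fun L => γ L * L.mu) →
      P γ = (ℙ {ω | (loopCluster (loopsOf N ω) 0 ∩ linfSphere d n).Nonempty}).toReal)
    (ℓ₀ : Loop d) (hℓ₀ : 0 < β ℓ₀) :
    ∀ (Ω : Type) (_ : MeasurableSpace Ω) (ℙ : Measure Ω) (_ : IsProbabilityMeasure ℙ)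
      (N : Loop d → Ω → ℕ), IsPoissonLoopProcess ℙ N (fun L => β L * L.mu) →
    HasDerivAt (fun t : ℝ => P (Function.update β ℓ₀ t))
      (Loop.mu ℓ₀ *
        (ℙ {ω | (ℓ₀.vertexSet ∩ loopCluster (loopsOf N ω) 0).Nonempty ∧
              (ℓ₀.vertexSet ∩ ⋃ z ∈ linfSphere d n, loopCluster (loopsOf N ω) z).Nonempty ∧
              loopCluster (loopsOf N ω) 0 ∩ linfSphere d n = ∅}).toReal)
      (β ℓ₀) :=
  russo_formula_loop_soup_general d n β hβ P hP ℓ₀ hℓ₀
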